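/- Let {X_{i,n}}_{i=1}^n be a triangular array of independent random vectors in ℝ^d and let 𝒫_n be the collection of joint distributions of (X_{i,n})_{i=1}^n. Suppose 𝒫_n satisfies the mean weak Cramér condition with parameter (b,c,R) for some b,c,R > 0, and sup_{n≥1} sup_{P∈𝒫_n} (1/n)Σ_{i=1}^n E_P[‖X_{i,n}‖] < ∞. Then for every r with 0 < r < R there exist ε > 0 and n_0 ≥ 1, depending only on b, c, R, and r, such that for all n ≥ n_0: sup_{r≤‖u‖≤R} sup_{P∈𝒫_n} (1/n)Σ_{i=1}^n |φ_{X_{i,n},P}(u)| ≤ 1 − ε, where φ_{X_{i,n},P}(u) = E_P[exp(i u'X_{i,n})]. -/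

import Mathlib

open MeasureTheory ProbabilityTheory Real
open scoped BigOperators ENNReal NNReal

noncomputable section

/-- Euclidean space ℝ^d. -/
abbrev Ed (d : ℕ) := EuclideanSpace ℝ (Fin d)

variable {d : ℕ}

/-- The characteristic function of a (Borel) measure on ℝ^d. -/
def charFn (μ : Measure (Ed d)) (t : Ed d) : ℂ :=
  ∫ x, Complex.exp (((inner ℝ t x : ℝ) : ℂ) * Complex.I) ∂μ

/-- Partial derivative in the k-th coordinate direction. -/
def partialD {F : Type*} [NormedAddCommGroup F] [NormedSpace ℝ F]
    (k : Fin d) (f : Ed d → F) : Ed d → F :=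
  fun x => fderiv ℝ f x (EuclideanSpace.single k 1)

/-- Iterated partial derivative `D^ν` for a multi-index ν. -/
def mDeriv {F : Type*} [NormedAddCommGroup F] [NormedSpace ℝ F]
    (ν : Fin d → ℕ) (f : Ed d → F) : Ed d → F :=
  (List.finRange d).foldr (fun k g => (partialD k)^[ν k] g) f

/-- The ν-th cumulant of a measure μ on ℝ^d:
`κ_ν = (−i)^{|ν|} D^ν (log φ_μ)(0)` where φ_μ is the characteristic function. -/
def cumulant (μ : Measure (Ed d)) (ν : Fin d → ℕ) : ℂ :=
  (-Complex.I) ^ (∑ k, ν k) * mDeriv ν (fun t => Complex.log (charFn μ t)) 0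

/-- The finite set of multi-indices ν ∈ ℤ₊^d with |ν| = j. -/
def multiIdx (d j : ℕ) : Finset (Fin d → ℕ) :=
  (Fintype.piFinset fun _ : Fin d => Finset.range (j + 1)).filter fun ν => ∑ k, ν k = j

/-- The differential operator `χ̄_j(−D)` applied to f, where
`χ̄_j(z) = j! Σ_{|ν|=j} (χ_ν/ν!) z^ν`. -/
def chiOpApply (χ : (Fin d → ℕ) → ℂ) (j : ℕ) (f : Ed d → ℂ) : Ed d → ℂ :=
  fun x => (j.factorial : ℂ) * (-1 : ℂ) ^ j *
    ∑ ν ∈ multiIdx d j, (χ ν / ∏ k, ((ν k).factorial : ℂ)) * mDeriv ν f x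

/-- The Edgeworth polynomial operator `P̃_j(−D; {χ_ν})` applied to f:
`P̃_j = Σ_{m=1}^{j} (1/m!) Σ*_{j_1+⋯+j_m=j} ∏_k χ̄_{j_k+2}(−D)/(j_k+2)!`,
encoded as a sum over compositions of j. -/
def edgeworthOp (χ : (Fin d → ℕ) → ℂ) (j : ℕ) (f : Ed d → ℂ) : Ed d → ℂ :=
  fun x => ∑ c : Composition j, ((c.length.factorial : ℂ))⁻¹ *
    (c.blocks.foldr
      (fun jk g => fun y => (((jk + 2).factorial : ℂ))⁻¹ * chiOpApply χ (jk + 2) g y) f) x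

/-- The standard normal density on ℝ^d. -/
def gaussDensity (d : ℕ) (x : Ed d) : ℝ :=
  (2 * π) ^ (-(d : ℝ) / 2) * Real.exp (-‖x‖ ^ 2 / 2)

/-- The density of the order-s Edgeworth signed measure
`Σ_{j=0}^{s−2} n^{−j/2} P̃_j(−D;{χ_ν}) φ(x)`. -/
def edgeworthDensity (χ : (Fin d → ℕ) → ℂ) (n s : ℕ) (x : Ed d) : ℝ :=
  (∑ j ∈ Finset.range (s - 1), (((n : ℝ) ^ (-(j : ℝ) / 2) : ℝ) : ℂ) *
    edgeworthOp χ j (fun y => ((gaussDensity d y : ℝ) : ℂ)) x).re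

/-- The order-s Edgeworth signed measure, as a set function `A ↦ ∫_A (density)`. -/
def edgeworthSM (χ : (Fin d → ℕ) → ℂ) (n s : ℕ) (A : Set (Ed d)) : ℝ :=
  ∫ x in A, edgeworthDensity χ n s x

/-- The standard normal distribution Φ = N(0, I_d) on ℝ^d. -/
def stdGaussian (d : ℕ) : Measure (Ed d) :=
  volume.withDensity fun x => ENNReal.ofReal (gaussDensity d x)

/-- Modulus of continuity `ω_f(x;ε) = sup {|f z − f y| : z,y ∈ B(x;ε)}`. -/
def oscil (f : Ed d → ℝ) (x : Ed d) (ε : ℝ) : ℝ :=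
  sSup {r | ∃ z ∈ Metric.ball x ε, ∃ y ∈ Metric.ball x ε, r = |f z - f y|}

/-- Averaged modulus of continuity `ω̄_f(ε;μ) = ∫ ω_f(x;ε) dμ(x)`. -/
def oscilBar (f : Ed d → ℝ) (ε : ℝ) (μ : Measure (Ed d)) : ℝ :=
  ∫ x, oscil f x ε ∂μ

/-- `M_s(f) = sup_x |f(x)|/(1+‖x‖^s)`. -/
def Msup (s : ℕ) (f : Ed d → ℝ) : ℝ := ⨆ x : Ed d, |f x| / (1 + ‖x‖ ^ s)

/-- The (uncentered) second-moment matrix `E[X X']` of a measure on ℝ^d. -/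
def covMat (μ : Measure (Ed d)) : Matrix (Fin d) (Fin d) ℝ :=
  Matrix.of fun k l => ∫ x, x k * x l ∂μ

open Classical in
/-- Inverse square root of a matrix (junk value if not positive semidefinite). -/
def matInvSqrt (M : Matrix (Fin d) (Fin d) ℝ) : Matrix (Fin d) (Fin d) ℝ :=
  if h : M.PosSemidef then ((h.1.eigenvectorUnitary : Matrix (Fin d) (Fin d) ℝ) * Matrix.diagonal (Real.sqrt ∘ h.1.eigenvalues) * (star h.1.eigenvectorUnitary : Matrix (Fin d) (Fin d) ℝ))⁻¹ else 1

open Classical in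
/-- Square root of a matrix (junk value if not positive semidefinite). -/
def matSqrt (M : Matrix (Fin d) (Fin d) ℝ) : Matrix (Fin d) (Fin d) ℝ :=
  if h : M.PosSemidef then ((h.1.eigenvectorUnitary : Matrix (Fin d) (Fin d) ℝ) * Matrix.diagonal (Real.sqrt ∘ h.1.eigenvalues) * (star h.1.eigenvectorUnitary : Matrix (Fin d) (Fin d) ℝ)) else 1

/-- Matrix-vector multiplication on Euclidean space. -/
def mulVecE (M : Matrix (Fin d) (Fin d) ℝ) (x : Ed d) : Ed d :=
  (EuclideanSpace.equiv (Fin d) ℝ).symm (M.mulVec (EuclideanSpace.equiv (Fin d) ℝ x))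

/-- Marginal distribution of the i-th coordinate. -/
def marginal {n : ℕ} (P : Measure (Fin n → Ed d)) (i : Fin n) : Measure (Ed d) :=
  P.map fun ω => ω i

/-- `V_{n,P} = (1/n) Σ_i Var_P(X_{i,n})` (for mean-zero coordinates). -/
def Vmat {d : ℕ} (n : ℕ) (P : Measure (Fin n → Ed d)) : Matrix (Fin d) (Fin d) ℝ :=
  (n : ℝ)⁻¹ • ∑ i : Fin n, covMat (marginal P i)

/-- `Q_{n,P}`, the distribution of `n^{−1/2} Σ_i V_{n,P}^{−1/2} X_{i,n}`. -/
def Qmeas {d : ℕ} (n : ℕ) (P : Measure (Fin n → Ed d)) : Measure (Ed d) :=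
  P.map fun ω => (Real.sqrt n)⁻¹ • ∑ i, mulVecE (matInvSqrt (Vmat n P)) (ω i)

/-- `χ̄_{ν,P}`, the average over i of the ν-th cumulant of `V_{n,P}^{−1/2} X_{i,n}`. -/
def chiBar {d : ℕ} (n : ℕ) (P : Measure (Fin n → Ed d)) (ν : Fin d → ℕ) : ℂ :=
  (n : ℂ)⁻¹ * ∑ i : Fin n, cumulant ((marginal P i).map (mulVecE (matInvSqrt (Vmat n P)))) ν

/-- `ρ_{n,s,P} = (1/n) Σ_i E_P ‖X_{i,n}‖^s`. -/
def rhoM {d : ℕ} (n s : ℕ) (P : Measure (Fin n → Ed d)) : ℝ :=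
  (n : ℝ)⁻¹ * ∑ i : Fin n, ∫ ω, ‖ω i‖ ^ s ∂P

/-- The mean weak Cramér condition with parameter (b,c,R) for a collection of
joint distributions of (X_{i,n})_{i=1}^n. -/
def meanWeakCramer {d : ℕ} {n : ℕ} (Ps : Set (Measure (Fin n → Ed d))) (b c R : ℝ) : Prop :=
  ∀ P ∈ Ps, ∀ t : Ed d, R < ‖t‖ →
    (n : ℝ)⁻¹ * ∑ i : Fin n, ‖charFn (marginal P i) t‖ ≤ 1 - c / ‖t‖ ^ b

/-- The weak Cramér condition with parameter (b,c,R) for a single distribution. -/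
def weakCramerMeas (μ : Measure (Ed d)) (b c R : ℝ) : Prop :=
  ∀ t : Ed d, R < ‖t‖ → ‖charFn μ t‖ ≤ 1 - c / ‖t‖ ^ b

/-- The empirical (resampling) measure `(1/n) Σ_j δ_{x_j}`. -/
def empMeas {d n : ℕ} (x : Fin n → Ed d) : Measure (Ed d) :=
  ((n : ℝ≥0∞))⁻¹ • ∑ i : Fin n, Measure.dirac (x i)

/-- Sample mean. -/
def sMean {d n : ℕ} (x : Fin n → Ed d) : Ed d := (n : ℝ)⁻¹ • ∑ i, x i

/-- Sample covariance matrix `V̂_n`. -/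
def Vhat {d n : ℕ} (x : Fin n → Ed d) : Matrix (Fin d) (Fin d) ℝ :=
  (n : ℝ)⁻¹ • ∑ i : Fin n, Matrix.of fun k l => (x i k - sMean x k) * (x i l - sMean x l)

/-- The bootstrap distribution `Q_{n,ℱ_n}`: the conditional distribution, given the
sample x, of `√n V̂_n^{−1/2}(X̄* − X̄)` where `X̄*` is the mean of n i.i.d. draws from
the empirical measure of x. -/
def bootQ {d n : ℕ} (x : Fin n → Ed d) : Measure (Ed d) :=
  (Measure.pi fun _ : Fin n => empMeas x).map
    fun y => Real.sqrt n • mulVecE (matInvSqrt (Vhat x)) (sMean y - sMean x)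

/-- `χ*_ν`, the ν-th cumulant of the conditional distribution of a bootstrap draw
given the sample, i.e. of the empirical measure. -/
def bootChi {d n : ℕ} (x : Fin n → Ed d) (ν : Fin d → ℕ) : ℂ := cumulant (empMeas x) ν

/-- `Q̃_{n,ℱ_n}`, the Edgeworth signed measure built from the bootstrap cumulants. -/
def bootQtilde {d n : ℕ} (s : ℕ) (x : Fin n → Ed d) (A : Set (Ed d)) : ℝ :=
  edgeworthSM (bootChi x) n s A

/-- Event `ℰ_{n,0}(ρ̄) = {(1/n) Σ ‖X_i‖^s ≤ ρ̄}`. -/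
def Ev0 {d : ℕ} (n s : ℕ) (ρ : ℝ) : Set (Fin n → Ed d) :=
  {x | (n : ℝ)⁻¹ * ∑ i, ‖x i‖ ^ s ≤ ρ}

/-- Event `ℰ_{n,1}(c₁) = {smallest eigenvalue of V̂_n ≥ c₁}` (via the quadratic form). -/
def Ev1 {d : ℕ} (n : ℕ) (c₁ : ℝ) : Set (Fin n → Ed d) :=
  {x | ∀ v : Ed d, c₁ * ‖v‖ ^ 2 ≤ (inner ℝ v (mulVecE (Vhat x) v) : ℝ)}

/-- Event `ℰ_{n,2}(c₂)`: all mixed absolute moments of the sample of order ≤ s are ≤ c₂. -/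
def Ev2 {d : ℕ} (n s : ℕ) (c₂ : ℝ) : Set (Fin n → Ed d) :=
  {x | ∀ v : Fin d → ℕ, (∑ k, v k) ≤ s → (n : ℝ)⁻¹ * ∑ i, ∏ k, |x i k| ^ (v k) ≤ c₂}

/-- `ξ(u,v;t) = inf_{q∈ℤ} (t'(u−v) − 2πq)²`. -/
def xiFn {d : ℕ} (t u v : Ed d) : ℝ := ⨅ q : ℤ, ((inner ℝ t (u - v) : ℝ) - 2 * π * (q : ℝ)) ^ 2

/-- Condition (★): `c_R ≤ sup_{‖t‖>R} (1/(2π²)) E_P[inf_q (t'(X₁−X₂) − 2πq)²]`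
for X₁, X₂ i.i.d. with distribution P. -/
def condStar {d : ℕ} (P : Measure (Ed d)) (R cR : ℝ) : Prop :=
  cR ≤ ⨆ t : {t : Ed d // R < ‖t‖},
    (2 * π ^ 2)⁻¹ * ∫ p : Ed d × Ed d, xiFn t.1 p.1 p.2 ∂(P.prod P)

/-! After rotating `φ(t)` onto the nonnegative reals, `1 - |φ(2t)| ≤ 4 (1 - |φ(t)|)` follows by
integrating the pointwise inequality `cos 2θ ≥ 4 cos θ - 3`. Iterating it `k` times with
`2 ^ k r > R` sends the annulus `r ≤ ‖u‖ ≤ R` into `R < ‖v‖ ≤ 2 ^ k R`, where the mean weak Cramér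
condition gives `1 - (1/n) Σᵢ |φᵢ(v)| ≥ c / (2 ^ k R) ^ b`; averaging the doubling inequality over `i`
carries this back to `u` at the cost of the factor `4 ^ k`. -/

lemma four_mul_re_integral_sub_three_le_re_integral_sq {X : Type*} [MeasurableSpace X]
    {μ : Measure X} [IsProbabilityMeasure μ] {f : X → ℂ} (hf : AEStronglyMeasurable f μ)
    (hnorm : ∀ x, ‖f x‖ = 1) :
    4 * (∫ x, f x ∂μ).re - 3 ≤ (∫ x, f x ^ 2 ∂μ).re := by
  have hfi : Integrable f μ := (integrable_const (1 : ℝ)).mono' hf (by simp [hnorm])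
  have hf2i : Integrable (fun x ↦ f x ^ 2) μ :=
    (integrable_const (1 : ℝ)).mono' (hf.pow 2) (by simp [hnorm])
  have hpoint : ∀ x, 4 * (f x).re - 3 ≤ (f x ^ 2).re := by
    intro x
    have h := Complex.sq_norm (f x)
    rw [hnorm, Complex.normSq_apply] at h
    rw [sq, Complex.mul_re]
    nlinarith [sq_nonneg ((f x).re - 1)]
  calc 4 * (∫ x, f x ∂μ).re - 3 = ∫ x, (4 * (f x).re - 3) ∂μ := by
        have hre : ∫ x, (f x).re ∂μ = (∫ x, f x ∂μ).re := integral_re hfi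
        rw [integral_sub (f := fun x ↦ 4 * (f x).re) (hfi.re.const_mul 4) (integrable_const 3),
          integral_const_mul, hre]
        simp
    _ ≤ ∫ x, (f x ^ 2).re ∂μ :=
        integral_mono ((hfi.re.const_mul 4).sub (integrable_const 3)) hf2i.re hpoint
    _ = (∫ x, f x ^ 2 ∂μ).re := integral_re hf2i

open Complex in
lemma one_sub_norm_charFun_two_smul_le {E : Type*} [NormedAddCommGroup E] [InnerProductSpace ℝ E]
    [MeasurableSpace E] [OpensMeasurableSpace E] (μ : Measure E) [IsProbabilityMeasure μ] (t : E) :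
    1 - ‖charFun μ ((2 : ℝ) • t)‖ ≤ 4 * (1 - ‖charFun μ t‖) := by
  set w : ℂ := exp ((-arg (charFun μ t) : ℝ) * I) with hw_def
  have hw : ‖w‖ = 1 := norm_exp_ofReal_mul_I _
  have hrot : w * charFun μ t = ‖charFun μ t‖ := by
    conv_lhs => rw [← norm_mul_exp_arg_mul_I (charFun μ t)]
    rw [hw_def, mul_left_comm, ← Complex.exp_add, ofReal_neg, neg_mul, neg_add_cancel,
      Complex.exp_zero, mul_one]
  set f : E → ℂ := fun x ↦ w * exp (inner ℝ x t * I)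
  have hf : AEStronglyMeasurable f μ := by fun_prop
  have hnorm : ∀ x, ‖f x‖ = 1 := fun x ↦ by simp [f, hw, norm_exp_ofReal_mul_I]
  have hint : ∫ x, f x ∂μ = ‖charFun μ t‖ := by
    rw [integral_const_mul, ← charFun_apply, hrot]
  have hint_sq : ∫ x, f x ^ 2 ∂μ = w ^ 2 * charFun μ ((2 : ℝ) • t) := by
    rw [charFun_apply, ← integral_const_mul]
    congr 1 with x
    rw [mul_pow, ← Complex.exp_nat_mul (inner ℝ x t * I), inner_smul_right]
    push_cast
    ring_nf
  have hre : (w ^ 2 * charFun μ ((2 : ℝ) • t)).re ≤ ‖charFun μ ((2 : ℝ) • t)‖ := by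
    calc _ ≤ ‖w ^ 2 * charFun μ ((2 : ℝ) • t)‖ := re_le_norm _
      _ = ‖charFun μ ((2 : ℝ) • t)‖ := by rw [norm_mul, norm_pow, hw, one_pow, one_mul]
  have key := four_mul_re_integral_sub_three_le_re_integral_sq hf hnorm
  rw [hint, hint_sq, ofReal_re] at key
  linarith

lemma one_sub_norm_charFun_two_pow_smul_le {E : Type*} [NormedAddCommGroup E]
    [InnerProductSpace ℝ E] [MeasurableSpace E] [OpensMeasurableSpace E] (μ : Measure E)
    [IsProbabilityMeasure μ] (k : ℕ) (t : E) :
    1 - ‖charFun μ ((2 : ℝ) ^ k • t)‖ ≤ 4 ^ k * (1 - ‖charFun μ t‖) := by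
  induction k with
  | zero => simp
  | succ k ih =>
    calc 1 - ‖charFun μ ((2 : ℝ) ^ (k + 1) • t)‖
        = 1 - ‖charFun μ ((2 : ℝ) • (2 : ℝ) ^ k • t)‖ := by rw [smul_smul, pow_succ']
      _ ≤ 4 * (1 - ‖charFun μ ((2 : ℝ) ^ k • t)‖) := one_sub_norm_charFun_two_smul_le μ _
      _ ≤ 4 ^ (k + 1) * (1 - ‖charFun μ t‖) := by
          rw [pow_succ', mul_assoc]; gcongr

lemma one_sub_mean_norm_charFun_two_pow_smul_le {E ι : Type*} [NormedAddCommGroup E]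
    [InnerProductSpace ℝ E] [MeasurableSpace E] [OpensMeasurableSpace E] [Fintype ι] [Nonempty ι]
    (μ : ι → Measure E) [∀ i, IsProbabilityMeasure (μ i)] (k : ℕ) (t : E) :
    1 - (Fintype.card ι : ℝ)⁻¹ * ∑ i, ‖charFun (μ i) ((2 : ℝ) ^ k • t)‖
      ≤ 4 ^ k * (1 - (Fintype.card ι : ℝ)⁻¹ * ∑ i, ‖charFun (μ i) t‖) := by
  have hmean (a : ι → ℝ) :
      1 - (Fintype.card ι : ℝ)⁻¹ * ∑ i, a i = (Fintype.card ι : ℝ)⁻¹ * ∑ i, (1 - a i) := by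
    rw [Finset.sum_sub_distrib, mul_sub, Finset.sum_const, Finset.card_univ, nsmul_one,
      inv_mul_cancel₀ (Nat.cast_ne_zero.mpr Fintype.card_ne_zero)]
  rw [hmean, hmean, mul_left_comm, Finset.mul_sum (s := Finset.univ) (a := (4 : ℝ) ^ k)]
  gcongr with i
  exact one_sub_norm_charFun_two_pow_smul_le (μ i) k t

lemma charFn_eq_charFun {d : ℕ} (μ : Measure (Ed d)) (t : Ed d) : charFn μ t = charFun μ t := by
  simp only [charFn, charFun_apply, real_inner_comm]

theorem mean_char_fun_bound_annulus_general
    (d : ℕ)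
    (Ps : (n : ℕ) → Set (Measure (Fin n → Ed d)))
    (hprob : ∀ n, ∀ P ∈ Ps n, IsProbabilityMeasure P)
    (b c R : ℝ) (hb : 0 < b) (hc : 0 < c)
    (hcramer : ∀ n, meanWeakCramer (Ps n) b c R)
    (r : ℝ) (hr0 : 0 < r) (hrR : r < R) :
    ∃ ε : ℝ, 0 < ε ∧ ∃ n₀ : ℕ, 1 ≤ n₀ ∧
      ∀ n, n₀ ≤ n → ∀ u : Ed d, r ≤ ‖u‖ → ‖u‖ ≤ R → ∀ P ∈ Ps n,
        (n : ℝ)⁻¹ * ∑ i : Fin n, ‖charFn (marginal P i) u‖ ≤ 1 - ε := by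
  obtain ⟨k, hk⟩ := pow_unbounded_of_one_lt (R / r) (one_lt_two (α := ℝ))
  have hR : 0 < R := hr0.trans hrR
  refine ⟨c / (4 ^ k * (2 ^ k * R) ^ b), by positivity, 1, le_rfl, ?_⟩
  intro n hn u hru huR P hP
  have := hprob n P hP
  have : Nonempty (Fin n) := ⟨⟨0, hn⟩⟩
  have (i : Fin n) : IsProbabilityMeasure (marginal P i) :=
    Measure.isProbabilityMeasure_map (measurable_pi_apply i).aemeasurable
  set v : Ed d := (2 : ℝ) ^ k • u
  have hv : ‖v‖ = 2 ^ k * ‖u‖ := by simp [v, norm_smul]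
  have hRv : R < ‖v‖ := by
    rw [div_lt_iff₀ hr0] at hk
    rw [hv]; nlinarith
  have hvR : ‖v‖ ≤ 2 ^ k * R := by rw [hv]; gcongr
  have hcram := hcramer n P hP v hRv
  have hdouble := one_sub_mean_norm_charFun_two_pow_smul_le (fun i ↦ marginal P i) k u
  have hv0 : 0 < ‖v‖ := hR.trans hRv
  have hpow : c / (2 ^ k * R) ^ b ≤ c / ‖v‖ ^ b :=
    div_le_div_of_nonneg_left hc.le (rpow_pos_of_pos hv0 b) (rpow_le_rpow hv0.le hvR hb.le)
  simp only [charFn_eq_charFun, Fintype.card_fin] at hcram hdouble ⊢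
  rw [div_mul_eq_div_div_swap, le_sub_comm, div_le_iff₀ (by positivity)]
  linarith

/-- **Lemma 4.1, first part (uniform-in-P bound on averaged characteristic functions on a
compact annulus).** If the collection 𝒫ₙ of joint distributions of the independent array
satisfies the mean weak Cramér condition with parameter (b,c,R) and the averaged first
moments are uniformly bounded, then for each `0 < r < R` there are `ε > 0` and `n₀ ≥ 1`
(depending only on b, c, R, r) with
`sup_{r≤‖u‖≤R} sup_{P∈𝒫ₙ} (1/n)Σᵢ|φ_{X_{i,n},P}(u)| ≤ 1 − ε` for all `n ≥ n₀`. -/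
theorem mean_char_fun_bound_annulus
    (d : ℕ) (hd : 1 ≤ d)
    (Ps : (n : ℕ) → Set (Measure (Fin n → Ed d)))
    (hprob : ∀ n, ∀ P ∈ Ps n, IsProbabilityMeasure P)
    (hindep : ∀ n, ∀ P ∈ Ps n,
      iIndepFun (m := fun _ : Fin n => (inferInstance : MeasurableSpace (Ed d)))
        (fun i ω => ω i) P)
    (b c R : ℝ) (hb : 0 < b) (hc : 0 < c) (hR : 0 < R)
    (hcramer : ∀ n, meanWeakCramer (Ps n) b c R)
    (hmom : ∃ M : ℝ, ∀ n, 1 ≤ n → ∀ P ∈ Ps n,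
      (n : ℝ)⁻¹ * ∑ i : Fin n, ∫ ω, ‖ω i‖ ∂P ≤ M)
    (r : ℝ) (hr0 : 0 < r) (hrR : r < R) :
    ∃ ε : ℝ, 0 < ε ∧ ∃ n₀ : ℕ, 1 ≤ n₀ ∧
      ∀ n, n₀ ≤ n → ∀ u : Ed d, r ≤ ‖u‖ → ‖u‖ ≤ R → ∀ P ∈ Ps n,
        (n : ℝ)⁻¹ * ∑ i : Fin n, ‖charFn (marginal P i) u‖ ≤ 1 - ε :=
  mean_char_fun_bound_annulus_general d Ps hprob b c R hb hc hcramer r hr0 hrR
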